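/- Under the same identification, the Chevalley generator F_a of gl_n acts on V^{S_{d̲}} (when d_a ≥ 1) as d_a·Ψ', where Ψ': V^{S_{d̲}} → V^{S_{f̃_a d̲}} is the symmetrization Ψ'(v) = (1/|S_{f̃_a d̲}|) ∑_{w ∈ S_{f̃_a d̲}} w(v). -/

import Mathlib

open Finset

noncomputable section
open scoped Classical

/-- Words of length `d` in the alphabet `{1, …, n}`. -/
abbrev Word (d n : ℕ) := Fin d → Fin n

/-- Extend a tuple `c : Fin n → ℕ` by zero to a function `ℕ → ℕ`. -/
def extf (n : ℕ) (c : Fin n → ℕ) : ℕ → ℕ := fun j => if h : j < n then c ⟨j, h⟩ else 0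

/-- Partial sums of `f : ℕ → ℕ`. -/
def psum (f : ℕ → ℕ) (i : ℕ) : ℕ := ∑ j ∈ Finset.range i, f j

/-- The index of the block (of the composition `f`) containing position `m`. -/
def bIdx (f : ℕ → ℕ) (m : ℕ) : ℕ := sInf {i | m < psum f (i + 1)}

theorem psum_extf (n : ℕ) (c : Fin n → ℕ) : psum (extf n c) n = ∑ i, c i := by
  unfold psum
  rw [← Fin.sum_univ_eq_sum_range]
  refine Finset.sum_congr rfl fun i _ => ?_
  simp [extf, i.isLt]

theorem bIdx_lt (n d : ℕ) (c : Fin n → ℕ) (hc : ∑ i, c i = d) (m : Fin d) :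
    bIdx (extf n c) m < n := by
  rcases n with _ | n
  · exfalso
    have h0 : d = 0 := by simpa using hc.symm
    have := m.2
    omega
  · have hmem : (m : ℕ) < psum (extf (n + 1) c) (n + 1) := by
      rw [psum_extf, hc]; exact m.2
    have := Nat.sInf_le (show n ∈ {i | (m : ℕ) < psum (extf (n + 1) c) (i + 1)} from hmem)
    unfold bIdx
    omega

/-- The canonical (monotone) word `θ_{d̲}` of a composition `d̲ = c` of `d`. -/
def wordOf (n d : ℕ) (c : Fin n → ℕ) (hc : ∑ i, c i = d) : Word d n :=
  fun m => ⟨bIdx (extf n c) m, bIdx_lt n d c hc m⟩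

/-- The Young subgroup `S_{d̲} ⊆ S_d` of a composition `d̲ = c`. -/
def youngC (n d : ℕ) (c : Fin n → ℕ) : Subgroup (Equiv.Perm (Fin d)) where
  carrier := {σ | ∀ m : Fin d, bIdx (extf n c) (σ m) = bIdx (extf n c) m}
  one_mem' := fun _ => rfl
  mul_mem' := by
    intro σ τ hσ hτ m
    simpa [Equiv.Perm.mul_apply, hτ m] using hσ (τ m)
  inv_mem' := by
    intro σ hσ m
    have h := hσ (σ⁻¹ m)
    simpa using h.symm

variable (n d : ℕ) (V : Type) [AddCommGroup V] [Module ℂ V]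
  (ρ : Representation ℂ (Equiv.Perm (Fin d)) V)

/-- A model for `V ⊗ E^{⊗d}`: functions from words to `V`. -/
abbrev TensV := Word d n → V

/-- The image of `v ∈ V^{S_{d̲}}` under the identification
`⊕_{d̲} V^{S_{d̲}} ≅ (V ⊗ E^{⊗d})^{S_d}`, namely `(1/d!) ∑_{x ∈ S_d} x(v) ⊗ x(θ_{d̲})`. -/
def phiFun (c : Fin n → ℕ) (hc : ∑ i, c i = d) (v : V) : TensV n d V :=
  fun w => (Nat.factorial d : ℂ)⁻¹ •
    ∑ x : Equiv.Perm (Fin d), if w ∘ x = wordOf n d c hc then ρ x v else 0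

/-- The Chevalley generator `F_a` of `gl_n` acting on `V ⊗ E^{⊗d}` (by the Leibniz rule on
the tensor factor `E^{⊗d}`, with `F_a θ_{ia} = θ_{ja}`, `ia = a`, `ja = a + 1`). -/
def chevFV (ia ja : Fin n) : TensV n d V →ₗ[ℂ] TensV n d V where
  toFun x := fun w => ∑ k : Fin d, if w k = ja then x (Function.update w k ia) else 0
  map_add' x y := by
    funext w
    show (∑ k : Fin d, _ : V) = (∑ k : Fin d, _ : V) + (∑ k : Fin d, _ : V)
    rw [← Finset.sum_add_distrib]
    refine Finset.sum_congr rfl fun k _ => ?_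
    split <;> simp
  map_smul' c x := by
    funext w
    show (∑ k : Fin d, _ : V) = c • (∑ k : Fin d, _ : V)
    rw [Finset.smul_sum]
    refine Finset.sum_congr rfl fun k _ => ?_
    split <;> simp

/-- The symmetrization operator `Ψ_{d̲', d̲} : V^{S_{d̲}} → V^{S_{d̲'}}`,
`Ψ(v) = (1/|S_{d̲'}|) ∑_{w ∈ S_{d̲'}} w(v)`. -/
def PsiAvg (c' : Fin n → ℕ) (v : V) : V :=
  (Nat.card (youngC n d c') : ℂ)⁻¹ •
    ∑ σ : Equiv.Perm (Fin d), if σ ∈ youngC n d c' then ρ σ v else 0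

/-! Write `θ = θ_{d̲}` and `θ' = θ_{f̃_a d̲}`. Both sides are `1/d!` times sums
`∑_{x ∈ S_d} x(u) ⊗ x(θ)`. By the Leibniz rule, `F_a` turns such a sum for `θ` into the sum of
the ones for the `d_a` words obtained from `θ` by changing one letter `a` into `a + 1`. Each of
these is `θ' ∘ τ`, where `τ ∈ S_{d̲}` is the transposition of the changed position with the last
position of the `a`-block (the one where `θ'` differs from `θ`); as `τ` fixes `v`, every such
word contributes the sum for `θ'` itself. On the other side `θ'` is fixed by `S_{f̃_a d̲}`, so
symmetrizing `v` over `S_{f̃_a d̲}` does not change the sum for `θ'`. -/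

theorem update_eq_and_eq_iff {α β : Type*} [DecidableEq α] {u θ : α → β} {m : α} {i j : β} :
    (u m = j ∧ Function.update u m i = θ) ↔ (θ m = i ∧ u = Function.update θ m j) := by
  rw [Function.update_eq_iff, Function.eq_update_iff]
  grind

theorem update_eq_update_comp_swap {α β : Type*} [DecidableEq α] {θ : α → β} {m p : α}
    (h : θ m = θ p) (j : β) :
    Function.update θ m j = Function.update θ p j ∘ Equiv.swap m p := by
  rw [Function.update_comp_equiv, Equiv.symm_swap, Equiv.swap_apply_right,
    Equiv.comp_swap_eq_update, h, Function.update_eq_self, Function.update_idem]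

theorem comp_swap_eq_self {α β : Type*} [DecidableEq α] {θ : α → β} {m p : α}
    (h : θ m = θ p) : θ ∘ Equiv.swap m p = θ := by
  rw [Equiv.comp_swap_eq_update, h, Function.update_eq_self, ← h, Function.update_eq_self]

theorem Fin.card_filter_val_mem_Ico {N lo hi : ℕ} (h : hi ≤ N) :
    #{m : Fin N | (m : ℕ) ∈ Ico lo hi} = hi - lo := by
  rw [← card_map Fin.valEmbedding, ← Nat.card_Ico]
  congr 1
  ext k
  simp only [mem_map, mem_filter, mem_univ, true_and, Fin.valEmbedding_apply]
  exact ⟨fun ⟨m, hm, hmk⟩ => hmk ▸ hm, fun hk => ⟨⟨k, by grind⟩, hk, rfl⟩⟩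

theorem psum_mono (f : ℕ → ℕ) : Monotone (psum f) := fun _ _ h =>
  Finset.sum_le_sum_of_subset (Finset.range_subset_range.2 h)

theorem psum_succ (f : ℕ → ℕ) (i : ℕ) : psum f (i + 1) = psum f i + f i :=
  Finset.sum_range_succ f i

theorem psum_add_ite_eq {f g : ℕ → ℕ} {a : ℕ}
    (h : ∀ i, g i + (if i = a then 1 else 0) = f i + (if i = a + 1 then 1 else 0)) (j : ℕ) :
    psum g j + (if j = a + 1 then 1 else 0) = psum f j := by
  induction j with
  | zero => simp [psum]
  | succ j ih =>
    rw [psum_succ, psum_succ]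
    have := h j
    split_ifs at this ih ⊢ <;> omega

theorem bIdx_eq_iff {f : ℕ → ℕ} {m : ℕ} (h : ∃ j, m < psum f (j + 1)) (i : ℕ) :
    bIdx f m = i ↔ psum f i ≤ m ∧ m < psum f (i + 1) := by
  constructor
  · rintro rfl
    refine ⟨?_, Nat.sInf_mem h⟩
    by_contra! hlt
    obtain ⟨k, hk⟩ : ∃ k, bIdx f m = k + 1 := Nat.exists_eq_add_one.2 <| Nat.pos_of_ne_zero
      fun h0 => by simp [h0, psum] at hlt
    have : bIdx f m ≤ k := Nat.sInf_le (show m < psum f (k + 1) from hk ▸ hlt)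
    omega
  · rintro ⟨hlo, hhi⟩
    refine le_antisymm (Nat.sInf_le hhi) (le_csInf ⟨i, hhi⟩ fun j hj => ?_)
    by_contra! hji
    have : psum f (j + 1) ≤ psum f i := psum_mono f hji
    exact absurd (show m < psum f (j + 1) from hj) (by omega)

section

variable {n d V}

theorem extf_update_update_add_ite {c : Fin n → ℕ} {i j : Fin n} (hij : (j : ℕ) = i + 1)
    (hi : 1 ≤ c i) (k : ℕ) :
    extf n (Function.update (Function.update c i (c i - 1)) j (c j + 1)) k +
        (if k = i then 1 else 0) = extf n c k + (if k = j then 1 else 0) := by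
  rcases lt_or_ge k n with hk | hk
  · obtain ⟨k, rfl⟩ : ∃ k' : Fin n, (k' : ℕ) = k := ⟨⟨k, hk⟩, rfl⟩
    simp only [extf, dif_pos hk, Fin.eta, Function.update_apply, ← Fin.ext_iff]
    split_ifs <;> subst_vars <;> omega
  · simp only [extf, dif_neg (not_lt.2 hk)]
    split_ifs <;> omega

theorem psum_extf_le {c : Fin n → ℕ} (hc : ∑ i, c i = d) {i : ℕ} (hi : i ≤ n) :
    psum (extf n c) i ≤ d :=
  hc ▸ psum_extf n c ▸ psum_mono _ hi

theorem wordOf_eq_iff {c : Fin n → ℕ} (hc : ∑ i, c i = d) (m : Fin d) (i : Fin n) :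
    wordOf n d c hc m = i ↔ psum (extf n c) i ≤ m ∧ m < psum (extf n c) (i + 1) := by
  have hm : (m : ℕ) < psum (extf n c) (n + 1) :=
    lt_of_lt_of_le (by rw [psum_extf, hc]; exact m.2) (psum_mono _ n.le_succ)
  rw [← bIdx_eq_iff ⟨n, hm⟩, Fin.ext_iff]
  rfl

theorem mem_youngC_iff {c : Fin n → ℕ} (hc : ∑ i, c i = d) (σ : Equiv.Perm (Fin d)) :
    σ ∈ youngC n d c ↔ wordOf n d c hc ∘ σ = wordOf n d c hc := by
  simp only [funext_iff, Function.comp_apply, Fin.ext_iff, wordOf]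
  rfl

theorem card_filter_wordOf_eq {c : Fin n → ℕ} (hc : ∑ i, c i = d) (i : Fin n) :
    #{m | wordOf n d c hc m = i} = c i := by
  simp_rw [wordOf_eq_iff, ← mem_Ico]
  rw [Fin.card_filter_val_mem_Ico (psum_extf_le hc i.isLt), psum_succ, Nat.add_sub_cancel_left]
  simp [extf]

-- `hshift` says `c' = c - e_i + e_j`, with both sides moved so that no subtraction occurs.
theorem exists_wordOf_eq_update {c c' : Fin n → ℕ} (hc : ∑ k, c k = d) (hc' : ∑ k, c' k = d)
    {i j : Fin n} (hij : (j : ℕ) = i + 1)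
    (hshift : ∀ k, extf n c' k + (if k = i then 1 else 0) =
      extf n c k + (if k = j then 1 else 0)) :
    ∃ p, wordOf n d c hc p = i ∧ wordOf n d c' hc' = Function.update (wordOf n d c hc) p j := by
  have hP := psum_add_ite_eq (hij ▸ hshift)
  have hci := hshift i
  rw [if_pos rfl, if_neg (by omega)] at hci
  have hPi := psum_succ (extf n c) i
  have hPd := psum_extf_le hc (show (i : ℕ) + 1 ≤ n from i.isLt)
  obtain ⟨p, hp⟩ : ∃ p : Fin d, (p : ℕ) + 1 = psum (extf n c) (i + 1) :=
    ⟨⟨psum (extf n c) (i + 1) - 1, by omega⟩, by dsimp only; omega⟩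
  refine ⟨p, (wordOf_eq_iff hc _ _).2 (by omega), funext fun m => ?_⟩
  rcases eq_or_ne m p with rfl | hm
  · have h1 := hP (i + 1)
    have h2 := hP (i + 1 + 1)
    have hPmono : psum (extf n c) (i + 1) ≤ psum (extf n c) (i + 1 + 1) := psum_mono _ (by omega)
    rw [if_pos rfl] at h1
    rw [if_neg (by omega)] at h2
    rw [Function.update_self, wordOf_eq_iff, hij]
    omega
  · obtain ⟨hlo, hhi⟩ := (wordOf_eq_iff hc m (wordOf n d c hc m)).1 rfl
    have h1 := hP (wordOf n d c hc m)
    have h2 := hP (wordOf n d c hc m + 1)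
    rw [Function.update_of_ne hm, wordOf_eq_iff]
    rw [Ne, Fin.ext_iff] at hm
    generalize (wordOf n d c hc m : ℕ) = k at hlo hhi h1 h2 ⊢
    rcases lt_trichotomy k i with hk | hk | hk
    · rw [if_neg (by omega)] at h1 h2; omega
    · rw [if_neg (by omega)] at h1; rw [if_pos (by omega)] at h2; subst hk; omega
    · rw [if_neg (by omega)] at h2; split_ifs at h1 <;> omega

def orbitSum (θ : Word d n) : V →ₗ[ℂ] TensV n d V :=
  LinearMap.pi fun w => ∑ x : Equiv.Perm (Fin d), if w ∘ x = θ then ρ x else 0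

theorem orbitSum_apply (θ : Word d n) (v : V) (w : Word d n) :
    orbitSum ρ θ v w = ∑ x : Equiv.Perm (Fin d), if w ∘ x = θ then ρ x v else 0 := by
  simp [orbitSum, LinearMap.sum_apply, apply_ite (fun f : V →ₗ[ℂ] V => f v)]

theorem chevFV_orbitSum (i j : Fin n) (θ : Word d n) (v : V) :
    chevFV n d V i j (orbitSum ρ θ v) =
      ∑ m ∈ univ.filter (θ · = i), orbitSum ρ (Function.update θ m j) v := by
  funext w
  simp only [chevFV, LinearMap.coe_mk, AddHom.coe_mk, Finset.sum_apply, orbitSum_apply,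
    Finset.sum_filter, Finset.ite_sum_zero, ← ite_and]
  rw [Finset.sum_comm, Finset.sum_comm (γ := Fin d)]
  refine Finset.sum_congr rfl fun x _ => ?_
  rw [← Equiv.sum_comp x]
  refine Finset.sum_congr rfl fun m _ => ?_
  simp only [Function.update_comp_equiv, Equiv.symm_apply_apply]
  exact if_congr (update_eq_and_eq_iff (u := w ∘ x)) rfl rfl

theorem orbitSum_map (θ : Word d n) (τ : Equiv.Perm (Fin d)) (v : V) :
    orbitSum ρ θ (ρ τ v) = orbitSum ρ (θ ∘ τ) v := by
  funext w
  rw [orbitSum_apply, orbitSum_apply]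
  refine Fintype.sum_equiv (Equiv.mulRight τ) _ _ fun x => ?_
  simp only [Equiv.coe_mulRight, Equiv.Perm.coe_mul, map_mul, Module.End.mul_apply,
    ← Function.comp_assoc, (Equiv.surjective τ).injective_comp_right.eq_iff]

theorem phiFun_eq_smul_orbitSum {c : Fin n → ℕ} (hc : ∑ i, c i = d) (v : V) :
    phiFun n d V ρ c hc v = (d.factorial : ℂ)⁻¹ • orbitSum ρ (wordOf n d c hc) v := by
  funext w
  rw [Pi.smul_apply, orbitSum_apply]
  rfl

theorem orbitSum_PsiAvg {c : Fin n → ℕ} (hc : ∑ i, c i = d) (v : V) :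
    orbitSum ρ (wordOf n d c hc) (PsiAvg n d V ρ c v) = orbitSum ρ (wordOf n d c hc) v := by
  have hterm : ∀ σ, orbitSum ρ (wordOf n d c hc) (if σ ∈ youngC n d c then ρ σ v else 0) =
      if σ ∈ youngC n d c then orbitSum ρ (wordOf n d c hc) v else 0 := by
    intro σ
    split_ifs with hσ
    · rw [orbitSum_map, (mem_youngC_iff hc σ).1 hσ]
    · exact map_zero _
  have hcard : (Nat.card (youngC n d c) : ℂ) ≠ 0 := Nat.cast_ne_zero.2 Nat.card_pos.ne'
  rw [PsiAvg, map_smul, map_sum]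
  simp_rw [hterm]
  rw [← Finset.sum_filter, Finset.sum_const, ← Fintype.card_subtype, ← Nat.card_eq_fintype_card,
    ← Nat.cast_smul_eq_nsmul ℂ, inv_smul_smul₀ hcard]

end

/-- Under the identification `⊕_{d̲} V^{S_{d̲}} ≅ (V ⊗ E^{⊗d})^{S_d}`, the
Chevalley generator `F_a` acts on the summand `V^{S_{d̲}}` (when `d_a ≥ 1`) as
`d_a · Ψ'`, where `Ψ' : V^{S_{d̲}} → V^{S_{f̃_a d̲}}` is the symmetrization operator. -/
theorem chevalley_F_is_symmetrization
    (a : ℕ) (ha : a + 1 < n)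
    (c : Fin n → ℕ) (hc : ∑ i, c i = d) (h1 : 1 ≤ c ⟨a, by omega⟩)
    (c' : Fin n → ℕ)
    (hc'def : c' = Function.update
        (Function.update c ⟨a, by omega⟩ (c ⟨a, by omega⟩ - 1)) ⟨a + 1, ha⟩
        (c ⟨a + 1, ha⟩ + 1))
    (hc' : ∑ i, c' i = d)
    (v : V) (hv : ∀ σ ∈ youngC n d c, ρ σ v = v) :
    chevFV n d V ⟨a, by omega⟩ ⟨a + 1, ha⟩ (phiFun n d V ρ c hc v) =
      phiFun n d V ρ c' hc'
        (((c ⟨a, by omega⟩ : ℕ) : ℂ) • PsiAvg n d V ρ c' v) := by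
  obtain ⟨p, hp, hθ'⟩ := exists_wordOf_eq_update hc hc' rfl
    (hc'def ▸ extf_update_update_add_ite rfl h1)
  have hfix : ∀ m ∈ univ.filter (wordOf n d c hc · = ⟨a, by omega⟩),
      orbitSum ρ (Function.update (wordOf n d c hc) m ⟨a + 1, ha⟩) v =
        orbitSum ρ (wordOf n d c' hc') v := by
    intro m hm
    have hmp : wordOf n d c hc m = wordOf n d c hc p := (mem_filter.1 hm).2.trans hp.symm
    rw [update_eq_update_comp_swap hmp, ← hθ', ← orbitSum_map,
      hv _ ((mem_youngC_iff hc _).2 (comp_swap_eq_self hmp))]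
  calc chevFV n d V ⟨a, by omega⟩ ⟨a + 1, ha⟩ (phiFun n d V ρ c hc v)
      = (d.factorial : ℂ)⁻¹ • ∑ m ∈ univ.filter (wordOf n d c hc · = ⟨a, by omega⟩),
          orbitSum ρ (Function.update (wordOf n d c hc) m ⟨a + 1, ha⟩) v := by
        rw [phiFun_eq_smul_orbitSum, map_smul, chevFV_orbitSum]
    _ = (d.factorial : ℂ)⁻¹ • ((c ⟨a, by omega⟩ : ℕ) : ℂ) • orbitSum ρ (wordOf n d c' hc') v := by
        rw [Finset.sum_congr rfl hfix, Finset.sum_const, card_filter_wordOf_eq,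
          Nat.cast_smul_eq_nsmul]
    _ = _ := by rw [phiFun_eq_smul_orbitSum, map_smul, orbitSum_PsiAvg]

end
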